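/- Let π : Ã* → G be an m-epi, let A = (Q, q₀, T, E) be a trim Ã-automaton, and let (p, a, q) ∈ E for some a ∈ Ã. Let B be the Ã-automaton obtained from A by adding the edge (q, a⁻¹, p). Then (L(B))π ⊆ ⟨(L(A))π⟩, the subgroup of G generated by (L(A))π. -/

import Mathlib

/-!  Common framework: words over an involutive alphabet Ã = A ∪ A⁻¹ (modelled as
`α × Bool`), free reduction, matched epimorphisms, Stallings sections and
Ã-automata, following Silva–Soler-Escrivà–Ventura. -/

/-- A word over the involutive alphabet Ã = A ∪ A⁻¹: the letter `(a, tt)` denotes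
`a` and `(a, ff)` denotes `a⁻¹` (the `FreeGroup` convention). -/
abbrev Word (α : Type) : Type := List (α × Bool)

namespace Stallings

instance {β : Type} : HasSubset (Language β) := ⟨fun L M => ∀ w ∈ L, w ∈ M⟩
instance {β : Type} : Union (Language β) := ⟨fun L M => {w | w ∈ L ∨ w ∈ M}⟩
instance {β : Type} : Inter (Language β) := ⟨fun L M => {w | w ∈ L ∧ w ∈ M}⟩
instance {β : Type} : EmptyCollection (Language β) := ⟨(∅ : Set (List β))⟩

variable {α : Type} {G : Type} [Group G]

/-- The formal inverse of a letter of Ã. -/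
def letterInv (x : α × Bool) : α × Bool := (x.1, !x.2)

/-- The formal inverse `w⁻¹` of a word over Ã. -/
def wordInv (w : Word α) : Word α := (w.map letterInv).reverse

/-- The free reduction `w̄` of a word over Ã (iterated deletion of factors `a a⁻¹`). -/
noncomputable def redW (w : Word α) : Word α :=
  letI := Classical.decEq α
  FreeGroup.reduce w

/-- The reduction `L̄` of a language over Ã. -/
noncomputable def red (L : Language (α × Bool)) : Language (α × Bool) :=
  redW '' L

/-- The set `R_A` of reduced words over Ã. -/
noncomputable def Reduced : Language (α × Bool) := {w | redW w = w}

/-- Evaluation of a monoid homomorphism `π : Ã* → G` at a word. -/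
def ev (π : FreeMonoid (α × Bool) →* G) (w : Word α) : G :=
  π (FreeMonoid.ofList w)

/-- The image of a language under (evaluation of) `π`. -/
def evImg (π : FreeMonoid (α × Bool) →* G) (L : Language (α × Bool)) : Set G :=
  {g | ∃ w ∈ L, ev π w = g}

/-- A matched epimorphism (m-epi) `π : Ã* → G`: a surjective monoid homomorphism
sending formal inverses to inverses. -/
structure IsMEpi (π : FreeMonoid (α × Bool) →* G) : Prop where
  surjective : Function.Surjective π
  matched : ∀ (a : α) (b : Bool),
    π (FreeMonoid.of (a, !b)) = (π (FreeMonoid.of (a, b)))⁻¹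

/-- `S_X = Xπ⁻¹ ∩ S`, for `X ⊆ G`. -/
def sub (S : Language (α × Bool)) (π : FreeMonoid (α × Bool) →* G) (X : Set G) :
    Language (α × Bool) :=
  {w ∈ S | ev π w ∈ X}

/-- A Stallings section for an m-epi `π : Ã* → G`: a regular section `S ⊆ R_A`
such that each `S_g` is regular (S1), and `S_{gh} ⊆ (S_g S_h)‾` (S2). -/
structure IsStallingsSection (π : FreeMonoid (α × Bool) →* G)
    (S : Language (α × Bool)) : Prop where
  regular : S.IsRegular
  reduced : S ⊆ Reduced
  inv_mem : ∀ w ∈ S, wordInv w ∈ S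
  exists_rep : ∀ g : G, ∃ w ∈ S, ev π w = g
  s1 : ∀ g : G, (sub S π {g}).IsRegular
  s2 : ∀ g h : G, sub S π {g * h} ⊆ red (sub S π {g} * sub S π {h})

/-- A group has a Stallings section if some m-epi onto it (from the free monoid on
an involutive finite alphabet) admits a Stallings section. -/
def HasStallingsSection (G : Type) [Group G] : Prop :=
  ∃ (α : Type) (π : FreeMonoid (α × Bool) →* G) (S : Language (α × Bool)),
    Finite α ∧ IsMEpi π ∧ IsStallingsSection π S

/-- `Pref L`: the set of prefixes of words of `L`. -/
def Pref (L : Language (α × Bool)) : Language (α × Bool) :=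
  {u | ∃ v, u ++ v ∈ L}

/-- An extendable Stallings section: every `u ∈ S` admits a reduced word `v` with
`u vⁿ ∈ S` for all `n` and `u ∈ Pref (S_{(u vⁿ u⁻¹)π})` for almost all `n`. -/
def Extendable (π : FreeMonoid (α × Bool) →* G) (S : Language (α × Bool)) : Prop :=
  ∀ u ∈ S, ∃ v : Word α, v ∈ Reduced ∧
    (∀ n : ℕ, u ++ (List.replicate n v).flatten ∈ S) ∧
    ∃ N : ℕ, ∀ n ≥ N, u ∈ Pref (sub S π {ev π u * (ev π v) ^ n * (ev π u)⁻¹})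

/-- An Ã-automaton with state type `Q`, initial state `start`, terminal states
`accept` and edge set `edges`. -/
structure Automaton (β : Type) (Q : Type) where
  start : Q
  accept : Set Q
  edges : Set (Q × β × Q)

namespace Automaton

variable {β Q : Type}

/-- `M.Path p w q`: there is a path from `p` to `q` labelled `w`. -/
inductive Path (M : Automaton β Q) : Q → List β → Q → Prop
  | nil (q : Q) : Path M q [] q
  | cons {p q r : Q} {a : β} {w : List β} :
      (p, a, q) ∈ M.edges → Path M q w r → Path M p (a :: w) r

/-- The language recognized by an automaton. -/
def lang (M : Automaton β Q) : Language β :=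
  {w | ∃ t ∈ M.accept, M.Path M.start w t}

/-- A trim automaton: every state lies on some successful path. -/
def Trim (M : Automaton β Q) : Prop :=
  ∀ q : Q, ∃ (u v : List β) (t : Q), t ∈ M.accept ∧ M.Path M.start u q ∧ M.Path q v t

/-- An involutive Ã-automaton. -/
def Involutive {α : Type} (M : Automaton (α × Bool) Q) : Prop :=
  ∀ p a q, (p, a, q) ∈ M.edges → (q, letterInv a, p) ∈ M.edges

/-- A deterministic automaton. -/
def Deterministic (M : Automaton β Q) : Prop :=
  ∀ p a q q', (p, a, q) ∈ M.edges → (p, a, q') ∈ M.edges → q = q'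

/-- An inverse automaton: involutive, deterministic, trim, with a single
terminal state. -/
def IsInverse {α : Type} (M : Automaton (α × Bool) Q) : Prop :=
  M.Involutive ∧ M.Deterministic ∧ M.Trim ∧ ∃ t : Q, M.accept = {t}

/-- The automaton obtained by identifying the states `p` and `q` (the quotient is
realized on the same state type, redirecting `q` to `p`). -/
def merge [DecidableEq Q] (M : Automaton β Q) (p q : Q) : Automaton β Q :=
  let f : Q → Q := fun x => if x = q then p else x
  { start := f M.start
    accept := f '' M.accept
    edges := {e | ∃ e' ∈ M.edges, e = (f e'.1, e'.2.1, f e'.2.2)} }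

end Automaton

/-! Fix, for every state `x`, a word `u x` labelling a path from the initial state to `x`.
For an edge `(x, b, y)` of `M`, trimness gives a path labelled `v` from `y` to a terminal
state, so `u x · b · v` and `u y · v` both lie in `L(M)`, and hence
`(u x)π (b π) (u y)π⁻¹ ∈ ⟨L(M)π⟩`. The added edge `(q, a⁻¹, p)` contributes the inverse of
the element contributed by `(p, a, q)`, because `π` is matched. Along a successful path of
the enlarged automaton these elements telescope to `(u q₀)π wπ (u t)π⁻¹`, and both
`(u q₀)π` and `(u t)π` lie in `⟨L(M)π⟩`. -/

variable {α G Q : Type} [Group G]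

@[simp]
theorem ev_nil (π : FreeMonoid (α × Bool) →* G) : ev π [] = 1 :=
  map_one π

theorem ev_append (π : FreeMonoid (α × Bool) →* G) (u v : Word α) :
    ev π (u ++ v) = ev π u * ev π v :=
  map_mul π _ _

theorem ev_cons (π : FreeMonoid (α × Bool) →* G) (b : α × Bool) (w : Word α) :
    ev π (b :: w) = ev π [b] * ev π w :=
  ev_append π [b] w

theorem IsMEpi.ev_letterInv {π : FreeMonoid (α × Bool) →* G} (hπ : IsMEpi π)
    (b : α × Bool) : ev π [letterInv b] = (ev π [b])⁻¹ :=
  hπ.matched b.1 b.2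

namespace Automaton

variable {β : Type}

def addEdge (M : Automaton β Q) (e : Q × β × Q) : Automaton β Q :=
  { M with edges := insert e M.edges }

theorem Path.append {M : Automaton β Q} {x y z : Q} {u v : List β}
    (hu : M.Path x u y) (hv : M.Path y v z) : M.Path x (u ++ v) z := by
  induction hu with
  | nil => exact hv
  | cons he _ ih => exact .cons he (ih hv)

theorem Path.single {M : Automaton β Q} {x y : Q} {b : β} (he : (x, b, y) ∈ M.edges) :
    M.Path x [b] y :=
  .cons he (.nil y)

end Automaton

section Closure

variable (π : FreeMonoid (α × Bool) →* G) {M : Automaton (α × Bool) Q}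

theorem ev_mul_ev_mul_inv_mem_closure_lang {x y t : Q} {u w u' v : Word α}
    (hu : M.Path M.start u x) (hw : M.Path x w y) (hu' : M.Path M.start u' y)
    (hv : M.Path y v t) (ht : t ∈ M.accept) :
    ev π u * ev π w * (ev π u')⁻¹ ∈ Subgroup.closure (evImg π M.lang) := by
  have huwv : ev π (u ++ w ++ v) ∈ Subgroup.closure (evImg π M.lang) :=
    Subgroup.subset_closure ⟨_, ⟨t, ht, (hu.append hw).append hv⟩, rfl⟩
  have hu'v : ev π (u' ++ v) ∈ Subgroup.closure (evImg π M.lang) :=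
    Subgroup.subset_closure ⟨_, ⟨t, ht, hu'.append hv⟩, rfl⟩
  have hquot : ev π (u ++ w ++ v) * (ev π (u' ++ v))⁻¹ = ev π u * ev π w * (ev π u')⁻¹ := by
    simp only [ev_append]; group
  rw [← hquot]
  exact mul_mem huwv (inv_mem hu'v)

variable {u : Q → Word α}

theorem Automaton.Trim.edge_mem_closure_lang (hM : M.Trim)
    (hu : ∀ x, M.Path M.start (u x) x) {x y : Q} {b : α × Bool}
    (he : (x, b, y) ∈ M.edges) :
    ev π (u x) * ev π [b] * (ev π (u y))⁻¹ ∈ Subgroup.closure (evImg π M.lang) := by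
  obtain ⟨-, v, t, ht, -, hv⟩ := hM y
  exact ev_mul_ev_mul_inv_mem_closure_lang π (hu x) (.single he) (hu y) hv ht

theorem Automaton.Trim.path_addEdge_letterInv_mem_closure_lang (hπ : IsMEpi π)
    (hM : M.Trim) (hu : ∀ x, M.Path M.start (u x) x) {p q : Q} {a : α × Bool}
    (he : (p, a, q) ∈ M.edges) {x y : Q} {w : Word α}
    (hw : (M.addEdge (q, letterInv a, p)).Path x w y) :
    ev π (u x) * ev π w * (ev π (u y))⁻¹ ∈ Subgroup.closure (evImg π M.lang) := by
  induction hw with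
  | nil x => simp
  | @cons x y z b w hb _ ih =>
    have hedge : ev π (u x) * ev π [b] * (ev π (u y))⁻¹ ∈
        Subgroup.closure (evImg π M.lang) := by
      rcases Set.mem_insert_iff.mp hb with hnew | hold
      · obtain ⟨rfl, rfl, rfl⟩ : x = q ∧ b = letterInv a ∧ y = p := by simpa using hnew
        have hinv : ev π (u x) * ev π [letterInv a] * (ev π (u y))⁻¹ =
            (ev π (u y) * ev π [a] * (ev π (u x))⁻¹)⁻¹ := by
          rw [hπ.ev_letterInv]; group
        rw [hinv]
        exact inv_mem (hM.edge_mem_closure_lang π hu he)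
      · exact hM.edge_mem_closure_lang π hu hold
    have htelescope : ev π (u x) * ev π (b :: w) * (ev π (u z))⁻¹ =
        (ev π (u x) * ev π [b] * (ev π (u y))⁻¹) *
          (ev π (u y) * ev π w * (ev π (u z))⁻¹) := by
      rw [ev_cons]; group
    rw [htelescope]
    exact mul_mem hedge ih

end Closure

end Stallings

open Stallings in
theorem lang_addInverseEdge_subset_closure_general {α G Q : Type} [Group G]
    (π : FreeMonoid (α × Bool) →* G) (hπ : IsMEpi π)
    (M : Automaton (α × Bool) Q) (hM : M.Trim)
    (p q : Q) (a : α × Bool) (he : (p, a, q) ∈ M.edges) :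
    evImg π ({ M with edges := insert (q, letterInv a, p) M.edges }
        : Automaton (α × Bool) Q).lang
      ⊆ ↑(Subgroup.closure (evImg π M.lang)) := by
  have hreach : ∀ x, ∃ u, M.Path M.start u x := fun x =>
    let ⟨u, _, _, _, hu, _⟩ := hM x
    ⟨u, hu⟩
  choose u hu using hreach
  rintro _ ⟨w, ⟨t, ht, hw⟩, rfl⟩
  have hpath := hM.path_addEdge_letterInv_mem_closure_lang π hπ hu he hw
  have hstart : (ev π (u M.start))⁻¹ ∈ Subgroup.closure (evImg π M.lang) := by
    obtain ⟨-, v, s, hs, -, hv⟩ := hM M.start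
    simpa using ev_mul_ev_mul_inv_mem_closure_lang π (.nil _) (.nil _) (hu _) hv hs
  have hend : ev π (u t) ∈ Subgroup.closure (evImg π M.lang) :=
    Subgroup.subset_closure ⟨_, ⟨t, ht, hu t⟩, rfl⟩
  have hw_eq : ev π w = (ev π (u M.start))⁻¹ *
      (ev π (u M.start) * ev π w * (ev π (u t))⁻¹) * ev π (u t) := by
    group
  rw [hw_eq]
  exact mul_mem (mul_mem hstart hpath) hend

open Stallings in
/-- Adding, to a trim Ã-automaton `M` with edge `(p, a, q)`, the
inverse edge `(q, a⁻¹, p)`, the resulting automaton `B` satisfies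
`(L(B))π ⊆ ⟨(L(M))π⟩`. -/
theorem lang_addInverseEdge_subset_closure {α G Q : Type} [Finite α] [Group G]
    (π : FreeMonoid (α × Bool) →* G) (hπ : IsMEpi π)
    (M : Automaton (α × Bool) Q) (hM : M.Trim)
    (p q : Q) (a : α × Bool) (he : (p, a, q) ∈ M.edges) :
    evImg π ({ M with edges := insert (q, letterInv a, p) M.edges }
        : Automaton (α × Bool) Q).lang
      ⊆ ↑(Subgroup.closure (evImg π M.lang)) :=
  lang_addInverseEdge_subset_closure_general π hπ M hM p q a he
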